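/- arXiv:1906.06899 — 3 statements merged into one kernel-verified Lean document; each statement's English description precedes it below -/
import Mathlib

section
/- Let L ≥ 1 be an integer and let x, y ∈ ℝ^T be nonzero vectors. Then cos_L(x, y) = 1 if and only if there exist ℓ ∈ {0,…,L−1} and a scalar α > 0 such that x = α S_ℓᵀ y or y = α S_ℓᵀ x. -/
open Matrix BigOperators

noncomputable section

/-- The `T × T` shift matrix `S_τ` with ones on the `τ`-th upper diagonal. -/
def shiftMat (T τ : ℕ) : Matrix (Fin T) (Fin T) ℝ :=
  Matrix.of fun i j => if (j : ℕ) = (i : ℕ) + τ then 1 else 0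

/-- Right shift with zero padding: `(S_τᵀ x)_j = x_{j-τ}`. -/
def shift {T : ℕ} (τ : ℕ) (x : Fin T → ℝ) : Fin T → ℝ :=
  (shiftMat T τ)ᵀ.mulVec x

/-- Euclidean dot product. -/
def dot {T : ℕ} (u v : Fin T → ℝ) : ℝ := ∑ i, u i * v i

/-- Euclidean norm. -/
def enorm {T : ℕ} (u : Fin T → ℝ) : ℝ := Real.sqrt (∑ i, u i ^ 2)

open Classical in
/-- Cosine of the angle between two vectors, with the convention that it is `0`
if either vector is zero. -/
def vcos {T : ℕ} (u v : Fin T → ℝ) : ℝ :=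
  if u = 0 ∨ v = 0 then 0 else dot u v / (_root_.enorm u * _root_.enorm v)

/-- The `L`-shift cosine similarity `cos_L`. -/
def cosL {T : ℕ} (L : ℕ) (u v : Fin T → ℝ) : ℝ :=
  ⨆ ℓ : Fin L, max (vcos (shift (ℓ : ℕ) u) v) (vcos u (shift (ℓ : ℕ) v))

/-!
`vcos u v` is the cosine of the Euclidean angle between `u` and `v`, so it is at most `1`, with
equality exactly when the angle vanishes, i.e. when `v` is a positive multiple of `u ≠ 0`.
A finite supremum of such quantities equals `1` exactly when one of its terms does.
-/

open InnerProductGeometry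

theorem Real.iSup_eq_iff_exists_eq {ι : Type*} [Finite ι] {f : ι → ℝ} {c : ℝ} (hc : c ≠ 0)
    (hf : ∀ i, f i ≤ c) : ⨆ i, f i = c ↔ ∃ i, f i = c := by
  cases isEmpty_or_nonempty ι with
  | inl _ => simp [Real.iSup_of_isEmpty, hc.symm]
  | inr _ =>
    obtain ⟨i, hi⟩ := exists_eq_ciSup_of_finite (f := f)
    refine ⟨fun h => ⟨i, hi.trans h⟩, fun ⟨j, hj⟩ => le_antisymm (ciSup_le hf) ?_⟩
    exact hj ▸ le_ciSup (Set.finite_range f).bddAbove j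

theorem max_eq_iff_of_le {α : Type*} [LinearOrder α] {a b c : α} (ha : a ≤ c) (hb : b ≤ c) :
    max a b = c ↔ a = c ∨ b = c := by
  constructor
  · intro h
    rcases max_choice a b with h' | h' <;> [left; right] <;> rw [← h', h]
  · rintro (rfl | rfl)
    exacts [max_eq_left hb, max_eq_right ha]

theorem dot_eq_inner_toLp {T : ℕ} (u v : Fin T → ℝ) :
    dot u v = inner ℝ (WithLp.toLp 2 u) (WithLp.toLp 2 v) := by
  simp [dot, PiLp.inner_apply, mul_comm]

theorem enorm_eq_norm_toLp {T : ℕ} (u : Fin T → ℝ) :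
    _root_.enorm u = ‖WithLp.toLp 2 u‖ := by
  simp [_root_.enorm, EuclideanSpace.norm_eq, sq_abs]

/-- The zero-vector convention of `vcos` agrees with `angle 0 v = π / 2`. -/
theorem vcos_eq_cos_angle {T : ℕ} (u v : Fin T → ℝ) :
    vcos u v = Real.cos (angle (WithLp.toLp 2 u) (WithLp.toLp 2 v)) := by
  rw [vcos]
  split_ifs with h
  · rcases h with rfl | rfl <;> simp
  · rw [cos_angle, dot_eq_inner_toLp, enorm_eq_norm_toLp, enorm_eq_norm_toLp]

theorem vcos_le_one {T : ℕ} (u v : Fin T → ℝ) : vcos u v ≤ 1 :=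
  vcos_eq_cos_angle u v ▸ Real.cos_le_one _

theorem vcos_comm {T : ℕ} (u v : Fin T → ℝ) : vcos u v = vcos v u := by
  rw [vcos_eq_cos_angle, vcos_eq_cos_angle, angle_comm]

theorem vcos_eq_one_iff {T : ℕ} (u v : Fin T → ℝ) :
    vcos u v = 1 ↔ u ≠ 0 ∧ ∃ r : ℝ, 0 < r ∧ v = r • u := by
  rw [vcos_eq_cos_angle, cos_eq_one_iff_angle_eq_zero, angle_eq_zero_iff]
  simp [← WithLp.toLp_smul]

theorem vcos_eq_one_iff_of_ne_zero {T : ℕ} {u v : Fin T → ℝ} (hv : v ≠ 0) :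
    vcos u v = 1 ↔ ∃ r : ℝ, 0 < r ∧ v = r • u := by
  refine (vcos_eq_one_iff u v).trans ⟨And.right, fun h => ⟨?_, h⟩⟩
  rintro rfl
  obtain ⟨r, -, rfl⟩ := h
  exact hv (smul_zero r)

theorem cosL_eq_one_iff_general (T L : ℕ) (x y : Fin T → ℝ)
    (hx : x ≠ 0) (hy : y ≠ 0) :
    cosL L x y = 1 ↔
      ∃ ℓ : ℕ, ℓ < L ∧ ∃ α : ℝ, 0 < α ∧ (x = α • shift ℓ y ∨ y = α • shift ℓ x) := by
  rw [cosL, Real.iSup_eq_iff_exists_eq one_ne_zero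
    fun ℓ => max_le (vcos_le_one _ _) (vcos_le_one _ _)]
  simp only [max_eq_iff_of_le (vcos_le_one _ _) (vcos_le_one _ _), vcos_comm x,
    vcos_eq_one_iff_of_ne_zero hx, vcos_eq_one_iff_of_ne_zero hy, Fin.exists_iff, exists_prop]
  refine exists_congr fun ℓ => and_congr_right' ?_
  rw [or_comm, ← exists_or]
  simp only [← and_or_left]

/-- for nonzero `x, y`, `cos_L(x,y) = 1` iff one is a positive multiple
of a shift (of length `< L`) of the other. -/
theorem cosL_eq_one_iff (T L : ℕ) (hL : 1 ≤ L) (x y : Fin T → ℝ)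
    (hx : x ≠ 0) (hy : y ≠ 0) :
    cosL L x y = 1 ↔
      ∃ ℓ : ℕ, ℓ < L ∧ ∃ α : ℝ, 0 < α ∧ (x = α • shift ℓ y ∨ y = α • shift ℓ x) :=
  cosL_eq_one_iff_general T L x y hx hy

end
end

section
/- Let V ∈ ℝ_+^{N×R} have no zero column, let M ∈ ℝ_+^{R×(T−R)}, let Π be a T×T permutation matrix, and set X = V [I_R M] Π (horizontal concatenation of the R×R identity and M). Assume X has no zero column. Let D_X ∈ ℝ^{T×T} and D_V ∈ ℝ^{R×R} be the diagonal matrices whose j-th diagonal entries are ‖X[:,j]‖₁^{−1} and ‖V[:,j]‖₁^{−1}, respectively. Then X D_X = (V D_V) G' where G' = D_V^{−1} [I_R M] Π D_X is entrywise nonnegative, every column of G' sums to 1, and G' = [I_R M'] Π for some M' ∈ ℝ_+^{R×(T−R)}; in particular, column normalization preserves the separable structure. -/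
open Matrix BigOperators

noncomputable section

/-- The 1-norm of the `j`-th column of a matrix. -/
def cn1 {m n : ℕ} (A : Matrix (Fin m) (Fin n) ℝ) (j : Fin n) : ℝ := ∑ i, |A i j|

/-- The `R × T` matrix `[B M] Π`: the horizontal concatenation of `B : R × R` and
`M : R × (T−R)` with its columns permuted by `π`. -/
def concatPerm {R T : ℕ} (hRT : R ≤ T) (B : Matrix (Fin R) (Fin R) ℝ)
    (M : Matrix (Fin R) (Fin (T - R)) ℝ) (π : Equiv.Perm (Fin T)) :
    Matrix (Fin R) (Fin T) ℝ :=
  Matrix.of fun j t =>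
    Matrix.fromCols B M j
      ((finSumFinEquiv.trans (finCongr (Nat.add_sub_cancel' hRT))).symm (π t))

/-!
Write `A = [I M] Π`. Since `V` and `A` are nonnegative, the 1-norm of the `t`-th column of
`X = V A` is `∑ j, ‖V[:,j]‖₁ A j t`, which is the `t`-th column sum of `D_V⁻¹ A`; rescaling by
`D_X` therefore produces unit column sums. A column `t` of `A` that is the unit vector `e_k`
gives `X[:,t] = V[:,k]`, so `‖X[:,t]‖₁ = ‖V[:,k]‖₁` and the rescaling returns it to `e_k`: the
identity block survives, and `M'` collects the rescaled remaining columns.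
-/

def concatEquiv {R T : ℕ} (hRT : R ≤ T) : Fin R ⊕ Fin (T - R) ≃ Fin T :=
  finSumFinEquiv.trans (finCongr (Nat.add_sub_cancel' hRT))

section concatPerm

variable {R T : ℕ} (hRT : R ≤ T) (π : Equiv.Perm (Fin T))

theorem concatPerm_apply (B : Matrix (Fin R) (Fin R) ℝ) (M : Matrix (Fin R) (Fin (T - R)) ℝ)
    (j : Fin R) (t : Fin T) :
    concatPerm hRT B M π j t = fromCols B M j ((concatEquiv hRT).symm (π t)) :=
  rfl

@[simp]
theorem concatPerm_apply_symm (B : Matrix (Fin R) (Fin R) ℝ)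
    (M : Matrix (Fin R) (Fin (T - R)) ℝ) (j : Fin R) (s : Fin R ⊕ Fin (T - R)) :
    concatPerm hRT B M π j (π.symm (concatEquiv hRT s)) = fromCols B M j s := by
  simp [concatPerm_apply]

theorem concatPerm_nonneg {B : Matrix (Fin R) (Fin R) ℝ} {M : Matrix (Fin R) (Fin (T - R)) ℝ}
    (hB : ∀ i j, 0 ≤ B i j) (hM : ∀ i j, 0 ≤ M i j) (j : Fin R) (t : Fin T) :
    0 ≤ concatPerm hRT B M π j t := by
  rw [concatPerm_apply]
  cases (concatEquiv hRT).symm (π t) with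
  | inl k => exact hB j k
  | inr l => exact hM j l

theorem eq_concatPerm_one_of_apply_inl {G : Matrix (Fin R) (Fin T) ℝ}
    (h : ∀ j k, G j (π.symm (concatEquiv hRT (.inl k))) = (1 : Matrix (Fin R) (Fin R) ℝ) j k) :
    G = concatPerm hRT 1 (G.submatrix id fun l => π.symm (concatEquiv hRT (.inr l))) π := by
  ext j t
  obtain ⟨s, rfl⟩ : ∃ s, t = π.symm (concatEquiv hRT s) := ⟨(concatEquiv hRT).symm (π t), by simp⟩
  cases s <;> simp [h]

theorem mul_concatPerm_one_apply_inl {N : ℕ} (V : Matrix (Fin N) (Fin R) ℝ)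
    (M : Matrix (Fin R) (Fin (T - R)) ℝ) (i : Fin N) (k : Fin R) :
    (V * concatPerm hRT 1 M π) i (π.symm (concatEquiv hRT (.inl k))) = V i k := by
  simp [mul_apply, one_apply]

end concatPerm

section cn1

variable {m n : ℕ}

theorem cn1_pos_iff {A : Matrix (Fin m) (Fin n) ℝ} {j : Fin n} :
    0 < cn1 A j ↔ (fun i => A i j) ≠ 0 := by
  simp [cn1, Finset.sum_pos_iff_of_nonneg, Function.ne_iff]

theorem cn1_mul_of_nonneg {r : ℕ} {V : Matrix (Fin m) (Fin r) ℝ} {A : Matrix (Fin r) (Fin n) ℝ}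
    (hV : ∀ i j, 0 ≤ V i j) (hA : ∀ j t, 0 ≤ A j t) (t : Fin n) :
    cn1 (V * A) t = ∑ j, cn1 V j * A j t := by
  have hVA : ∀ i, 0 ≤ (V * A) i t := fun i => by
    rw [mul_apply]
    exact Finset.sum_nonneg fun j _ => mul_nonneg (hV i j) (hA j t)
  calc cn1 (V * A) t = ∑ i, ∑ j, V i j * A j t :=
        Finset.sum_congr rfl fun i _ => by rw [abs_of_nonneg (hVA i), mul_apply]
    _ = ∑ j, cn1 V j * A j t := by
        simp only [cn1, abs_of_nonneg (hV _ _), Finset.sum_mul]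
        exact Finset.sum_comm

end cn1

theorem mul_diagonal_inv_mul_diagonal_mul {K : Type*} [Field K] {m r n : Type*} [Fintype r]
    [DecidableEq r] (V : Matrix m r K) (B : Matrix r n K) {d : r → K} (hd : ∀ j, d j ≠ 0) :
    V * diagonal (fun j => (d j)⁻¹) * (diagonal d * B) = V * B := by
  rw [Matrix.mul_assoc, ← Matrix.mul_assoc (diagonal _), diagonal_mul_diagonal]
  simp [inv_mul_cancel₀ (hd _)]

/-- column normalization preserves the separable structure. If
`X = V [I M] Π` with `V ≥ 0` (no zero column), `M ≥ 0`, `Π` a permutation, and `X` has no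
zero column, then `X D_X = (V D_V) G'` where `G' = D_V⁻¹ [I M] Π D_X` is nonnegative with
unit column sums and `G' = [I M'] Π` for some nonnegative `M'`. -/
theorem normalization_preserves_separability (N R T : ℕ) (hRT : R ≤ T)
    (V : Matrix (Fin N) (Fin R) ℝ) (hVpos : ∀ i j, 0 ≤ V i j)
    (hVcol : ∀ j : Fin R, (fun i => V i j) ≠ 0)
    (M : Matrix (Fin R) (Fin (T - R)) ℝ) (hM : ∀ i j, 0 ≤ M i j)
    (π : Equiv.Perm (Fin T))
    (X : Matrix (Fin N) (Fin T) ℝ) (hX : X = V * concatPerm hRT 1 M π)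
    (hXcol : ∀ t : Fin T, (fun i => X i t) ≠ 0)
    (DX : Matrix (Fin T) (Fin T) ℝ)
    (hDX : DX = Matrix.diagonal fun t => (cn1 X t)⁻¹)
    (DV : Matrix (Fin R) (Fin R) ℝ)
    (hDV : DV = Matrix.diagonal fun j => (cn1 V j)⁻¹)
    (G' : Matrix (Fin R) (Fin T) ℝ)
    (hG' : G' = Matrix.diagonal (fun j => cn1 V j) * concatPerm hRT 1 M π * DX) :
    X * DX = V * DV * G' ∧ (∀ j t, 0 ≤ G' j t) ∧ (∀ t : Fin T, ∑ j, G' j t = 1) ∧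
      ∃ M' : Matrix (Fin R) (Fin (T - R)) ℝ, (∀ i j, 0 ≤ M' i j) ∧
        G' = concatPerm hRT 1 M' π := by
  set A := concatPerm hRT 1 M π
  have hA : ∀ j t, 0 ≤ A j t := concatPerm_nonneg hRT π zero_le_one_elem hM
  have hV : ∀ j, 0 < cn1 V j := fun j => cn1_pos_iff.2 (hVcol j)
  have hXpos : ∀ t, 0 < cn1 X t := fun t => cn1_pos_iff.2 (hXcol t)
  have hG'_apply : ∀ j t, G' j t = cn1 V j * A j t * (cn1 X t)⁻¹ := fun j t => by
    rw [hG', hDX, mul_diagonal, diagonal_mul]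
  have hG'_nonneg : ∀ j t, 0 ≤ G' j t := fun j t => by
    rw [hG'_apply]
    exact mul_nonneg (mul_nonneg (hV j).le (hA j t)) (inv_nonneg.2 (hXpos t).le)
  refine ⟨?_, hG'_nonneg, fun t => ?_, _, fun j l => hG'_nonneg _ _,
    eq_concatPerm_one_of_apply_inl hRT π fun j k => ?_⟩
  · rw [hG', hDV, ← Matrix.mul_assoc, mul_diagonal_inv_mul_diagonal_mul _ _ fun j => (hV j).ne',
      hX]
  · simp_rw [hG'_apply, ← Finset.sum_mul, ← cn1_mul_of_nonneg hVpos hA, ← hX]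
    exact mul_inv_cancel₀ (hXpos t).ne'
  · have hXk : cn1 X (π.symm (concatEquiv hRT (.inl k))) = cn1 V k := by
      simp only [cn1, hX, A, mul_concatPerm_one_apply_inl]
    rw [hG'_apply, hXk]
    obtain rfl | hjk := eq_or_ne j k
    · simp [A, (hV j).ne']
    · simp [A, one_apply_ne hjk]

end
end

section
/- Let A, Ã ∈ ℝ^{T×R} both have rank R, let b, b̃ ∈ ℝ^T, and set F = A − Ã and e = b − b̃. Let C ⊆ ℝ^R be a convex set, let y ∈ C satisfy A y = b, and let ỹ ∈ C satisfy ‖Ã ỹ − b̃‖₂ ≤ ‖Ã y' − b̃‖₂ for all y' ∈ C (i.e., ỹ minimizes ‖Ã y' − b̃‖₂² over y' ∈ C). If σ_min(A) > σ_max(F), then ‖y − ỹ‖₂ ≤ (σ_max(F) ‖y‖₂ + ‖e‖₂) / (σ_min(A) − σ_max(F)). -/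
/-!
Write `r = Ã ỹ − b̃` for the optimal residual. Since `r` is the point of smallest norm in the
convex set `{Ã z − b̃ | z ∈ C}`, it makes an obtuse angle with every other point `w` of that set,
so `‖w − r‖ ≤ ‖w‖`; for `w = Ã y − b̃ = e − F y` this reads `‖Ã (y − ỹ)‖ ≤ ‖e‖ + σ_max(F) ‖y‖`.
On the other side `A = Ã + F` gives `‖Ã (y − ỹ)‖ ≥ (σ_min(A) − σ_max(F)) ‖y − ỹ‖`.
-/

open Matrix BigOperators

noncomputable section

/-- The largest singular value of a rectangular matrix, characterized as the supremum of
`‖B v‖₂` over unit vectors `v`. -/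
def smax {T R : ℕ} (B : Matrix (Fin T) (Fin R) ℝ) : ℝ :=
  sSup {c : ℝ | ∃ v : Fin R → ℝ, _root_.enorm v = 1 ∧ c = _root_.enorm (B.mulVec v)}

/-- The smallest (`R`-th) singular value of a `T × R` matrix, characterized as the infimum
of `‖B v‖₂` over unit vectors `v`. -/
def smin {T R : ℕ} (B : Matrix (Fin T) (Fin R) ℝ) : ℝ :=
  sInf {c : ℝ | ∃ v : Fin R → ℝ, _root_.enorm v = 1 ∧ c = _root_.enorm (B.mulVec v)}

theorem Convex.norm_sub_le_norm_of_isMinOn {F : Type*} [NormedAddCommGroup F]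
    [InnerProductSpace ℝ F] {K : Set F} (hK : Convex ℝ K) {r w : F} (hr : r ∈ K) (hw : w ∈ K)
    (hmin : IsMinOn (‖·‖) K r) : ‖w - r‖ ≤ ‖w‖ := by
  have : Nonempty K := ⟨⟨r, hr⟩⟩
  have hinf : ‖0 - r‖ = ⨅ z : K, ‖0 - (z : F)‖ := by
    refine le_antisymm (le_ciInf fun z => ?_) (ciInf_le ⟨0, ?_⟩ (⟨r, hr⟩ : K))
    · simpa using isMinOn_iff.1 hmin z z.2
    · rintro _ ⟨z, rfl⟩; exact norm_nonneg _
  have hobtuse : 0 ≤ inner ℝ (w - r) r := by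
    have := (norm_eq_iInf_iff_real_inner_le_zero hK hr).1 hinf w hw
    rw [zero_sub, inner_neg_left, real_inner_comm] at this
    linarith
  have hexpand := norm_add_sq_real (w - r) r
  rw [sub_add_cancel] at hexpand
  nlinarith [norm_nonneg (w - r), norm_nonneg w]

namespace LeastSquares

section EuclideanNorm

variable {n : ℕ}

theorem enorm_eq_norm_toLp (u : Fin n → ℝ) :
    _root_.enorm u = ‖(WithLp.toLp 2 u : EuclideanSpace ℝ (Fin n))‖ := by
  simp [_root_.enorm, EuclideanSpace.norm_eq]

theorem enorm_nonneg (u : Fin n → ℝ) : 0 ≤ _root_.enorm u := Real.sqrt_nonneg _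

theorem enorm_pos {u : Fin n → ℝ} (hu : u ≠ 0) : 0 < _root_.enorm u := by
  rw [enorm_eq_norm_toLp, norm_pos_iff]
  exact (WithLp.toLp_eq_zero 2).not.2 hu

theorem enorm_add_le (u v : Fin n → ℝ) :
    _root_.enorm (u + v) ≤ _root_.enorm u + _root_.enorm v := by
  simpa only [enorm_eq_norm_toLp, WithLp.toLp_add] using norm_add_le _ _

theorem enorm_sub_le (u v : Fin n → ℝ) :
    _root_.enorm (u - v) ≤ _root_.enorm u + _root_.enorm v := by
  simpa only [enorm_eq_norm_toLp, WithLp.toLp_sub] using norm_sub_le _ _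

theorem enorm_smul (c : ℝ) (u : Fin n → ℝ) : _root_.enorm (c • u) = |c| * _root_.enorm u := by
  simp only [enorm_eq_norm_toLp, WithLp.toLp_smul, norm_smul, Real.norm_eq_abs]

end EuclideanNorm

variable {T R : ℕ}

/-- The set whose `sSup` and `sInf` are `smax B` and `smin B`. -/
def unitImageNorms (B : Matrix (Fin T) (Fin R) ℝ) : Set ℝ :=
  {c : ℝ | ∃ v : Fin R → ℝ, _root_.enorm v = 1 ∧ c = _root_.enorm (B.mulVec v)}

theorem enorm_mulVec_div_mem_unitImageNorms (B : Matrix (Fin T) (Fin R) ℝ) {v : Fin R → ℝ}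
    (hv : v ≠ 0) : _root_.enorm (B *ᵥ v) / _root_.enorm v ∈ unitImageNorms B := by
  have hinv : 0 < (_root_.enorm v)⁻¹ := inv_pos.2 (enorm_pos hv)
  refine ⟨(_root_.enorm v)⁻¹ • v, ?_, ?_⟩
  · rw [enorm_smul, abs_of_pos hinv, inv_mul_cancel₀ (enorm_pos hv).ne']
  · rw [mulVec_smul, enorm_smul, abs_of_pos hinv, div_eq_inv_mul]

theorem bddAbove_unitImageNorms (B : Matrix (Fin T) (Fin R) ℝ) :
    BddAbove (unitImageNorms B) := by
  refine ⟨‖LinearMap.toContinuousLinearMap (toEuclideanLin B)‖, ?_⟩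
  rintro _ ⟨v, hv, rfl⟩
  rw [enorm_eq_norm_toLp] at hv ⊢
  simpa [hv] using
    (LinearMap.toContinuousLinearMap (toEuclideanLin B)).le_opNorm (WithLp.toLp 2 v)

theorem bddBelow_unitImageNorms (B : Matrix (Fin T) (Fin R) ℝ) :
    BddBelow (unitImageNorms B) :=
  ⟨0, by rintro _ ⟨v, -, rfl⟩; exact enorm_nonneg _⟩

theorem enorm_mulVec_le_smax_mul (B : Matrix (Fin T) (Fin R) ℝ) (v : Fin R → ℝ) :
    _root_.enorm (B *ᵥ v) ≤ smax B * _root_.enorm v := by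
  rcases eq_or_ne v 0 with rfl | hv
  · simp [_root_.enorm]
  exact (div_le_iff₀ (enorm_pos hv)).1 <|
    le_csSup (bddAbove_unitImageNorms B) (enorm_mulVec_div_mem_unitImageNorms B hv)

theorem smin_mul_le_enorm_mulVec (B : Matrix (Fin T) (Fin R) ℝ) (v : Fin R → ℝ) :
    smin B * _root_.enorm v ≤ _root_.enorm (B *ᵥ v) := by
  rcases eq_or_ne v 0 with rfl | hv
  · simp [_root_.enorm]
  exact (le_div_iff₀ (enorm_pos hv)).1 <|
    csInf_le (bddBelow_unitImageNorms B) (enorm_mulVec_div_mem_unitImageNorms B hv)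

theorem enorm_mulVec_sub_le_of_forall_le (B : Matrix (Fin T) (Fin R) ℝ) (c : Fin T → ℝ)
    {C : Set (Fin R → ℝ)} (hC : Convex ℝ C) {y x : Fin R → ℝ} (hy : y ∈ C) (hx : x ∈ C)
    (hmin : ∀ y' ∈ C, _root_.enorm (B *ᵥ x - c) ≤ _root_.enorm (B *ᵥ y' - c)) :
    _root_.enorm (B *ᵥ (y - x)) ≤ _root_.enorm (B *ᵥ y - c) := by
  let residual : (Fin R → ℝ) →ᵃ[ℝ] EuclideanSpace ℝ (Fin T) :=
    ((WithLp.linearEquiv 2 ℝ (Fin T → ℝ)).symm.toLinearMap ∘ₗ B.mulVecLin).toAffineMap -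
      AffineMap.const ℝ _ (WithLp.toLp 2 c)
  have hresidual (z : Fin R → ℝ) : residual z = WithLp.toLp 2 (B *ᵥ z - c) := by
    simp [residual]
  have key := (hC.affine_image residual).norm_sub_le_norm_of_isMinOn
    (Set.mem_image_of_mem _ hx) (Set.mem_image_of_mem _ hy) <| isMinOn_iff.2 <|
      Set.forall_mem_image.2 fun z hz => by simpa [hresidual, enorm_eq_norm_toLp] using hmin z hz
  simpa [hresidual, enorm_eq_norm_toLp, mulVec_sub] using key

end LeastSquares

theorem least_squares_perturbation_general (T R : ℕ)
    (A At : Matrix (Fin T) (Fin R) ℝ)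
    (b bt : Fin T → ℝ)
    (F : Matrix (Fin T) (Fin R) ℝ) (hF : F = A - At)
    (e : Fin T → ℝ) (he : e = b - bt)
    (C : Set (Fin R → ℝ)) (hC : Convex ℝ C)
    (y : Fin R → ℝ) (hy : y ∈ C) (hAy : A.mulVec y = b)
    (yt : Fin R → ℝ) (hyt : yt ∈ C)
    (hmin : ∀ y' ∈ C, _root_.enorm (At.mulVec yt - bt) ≤ _root_.enorm (At.mulVec y' - bt))
    (hσ : smax F < smin A) :
    _root_.enorm (y - yt) ≤ (smax F * _root_.enorm y + _root_.enorm e) / (smin A - smax F) := by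
  have hsplit : A *ᵥ (y - yt) = At *ᵥ (y - yt) + F *ᵥ (y - yt) := by
    rw [hF, sub_mulVec]; abel
  have hresidual : At *ᵥ y - bt = e - F *ᵥ y := by
    rw [hF, he, sub_mulVec, hAy]; abel
  rw [le_div_iff₀ (sub_pos.2 hσ)]
  calc _root_.enorm (y - yt) * (smin A - smax F)
      = smin A * _root_.enorm (y - yt) - smax F * _root_.enorm (y - yt) := by ring
    _ ≤ _root_.enorm (A *ᵥ (y - yt)) - _root_.enorm (F *ᵥ (y - yt)) :=
      sub_le_sub (LeastSquares.smin_mul_le_enorm_mulVec A _)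
        (LeastSquares.enorm_mulVec_le_smax_mul F _)
    _ ≤ _root_.enorm (At *ᵥ (y - yt)) := by
      rw [hsplit]; linarith [LeastSquares.enorm_add_le (At *ᵥ (y - yt)) (F *ᵥ (y - yt))]
    _ ≤ _root_.enorm (At *ᵥ y - bt) :=
      LeastSquares.enorm_mulVec_sub_le_of_forall_le At bt hC hy hyt hmin
    _ = _root_.enorm (e - F *ᵥ y) := by rw [hresidual]
    _ ≤ _root_.enorm e + _root_.enorm (F *ᵥ y) := LeastSquares.enorm_sub_le _ _
    _ ≤ smax F * _root_.enorm y + _root_.enorm e := by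
      linarith [LeastSquares.enorm_mulVec_le_smax_mul F y]

/-- Least squares perturbation, Lötstedt: if `A y = b` with `y ∈ C` convex,
`ỹ` minimizes `‖Ã y' − b̃‖₂` over `C`, and `σ_min(A) > σ_max(F)` where `F = A − Ã`,
then `‖y − ỹ‖₂ ≤ (σ_max(F)‖y‖₂ + ‖e‖₂)/(σ_min(A) − σ_max(F))` where `e = b − b̃`. -/
theorem least_squares_perturbation (T R : ℕ)
    (A At : Matrix (Fin T) (Fin R) ℝ) (hA : A.rank = R) (hAt : At.rank = R)
    (b bt : Fin T → ℝ)
    (F : Matrix (Fin T) (Fin R) ℝ) (hF : F = A - At)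
    (e : Fin T → ℝ) (he : e = b - bt)
    (C : Set (Fin R → ℝ)) (hC : Convex ℝ C)
    (y : Fin R → ℝ) (hy : y ∈ C) (hAy : A.mulVec y = b)
    (yt : Fin R → ℝ) (hyt : yt ∈ C)
    (hmin : ∀ y' ∈ C, _root_.enorm (At.mulVec yt - bt) ≤ _root_.enorm (At.mulVec y' - bt))
    (hσ : smax F < smin A) :
    _root_.enorm (y - yt) ≤ (smax F * _root_.enorm y + _root_.enorm e) / (smin A - smax F) :=
  least_squares_perturbation_general T R A At b bt F hF e he C hC y hy hAy yt hyt hmin hσ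

end
end
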